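/- Let F: X → P(Y) be such that {φ_{F,w*} : w* ∈ W*} is lower equicontinuous at x₀ ∈ dom F and F(x₀) is compact. Then for any nets x → x₀ in X and w* → w*₀ weakly* in W*, liminf φ_{F,w*}(x) ≥ φ_{F,w*₀}(x₀). -/

import Mathlib

open Pointwise Set Filter Topology

/-- Scalarization of a set `A ⊆ Y` by a weak-star functional: `inf {w(a) : a ∈ A}` in `EReal`
(with `inf ∅ = +∞`). -/
noncomputable def scal {Y : Type*} [AddCommMonoid Y] [Module ℝ Y] [TopologicalSpace Y]
    (w : WeakDual ℝ Y) (A : Set Y) : EReal :=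
  sInf ((fun a => ((w a : ℝ) : EReal)) '' A)

/-- `F` is `C`-convex. -/
def CConvex {X Y : Type*} [AddCommGroup X] [Module ℝ X] [AddCommGroup Y] [Module ℝ Y]
    (F : X → Set Y) (C : Set Y) : Prop :=
  ∀ x₁ x₂ : X, ∀ t : ℝ, t ∈ Set.Icc (0 : ℝ) 1 →
    t • F x₁ + (1 - t) • F x₂ ⊆ F (t • x₁ + (1 - t) • x₂) + C

/-- Lower Dini directional derivative of `φ : X → EReal` at `x` in direction `d`:
`liminf_{t → 0+} (φ (x + t • d) - φ x) * (1/t)`. -/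
noncomputable def diniX {X : Type*} [AddCommGroup X] [Module ℝ X]
    (φ : X → EReal) (x d : X) : EReal :=
  Filter.liminf (fun t : ℝ => (φ (x + t • d) - φ x) * (((1 : ℝ) / t : ℝ) : EReal))
    (nhdsWithin 0 (Set.Ioi 0))

/-! Nonnegativity on `C` turns an interior point `e` of `C` into a uniform bound: if
`e ± t • u ∈ C` then `t * |w u| ≤ w e`, and `w e` is bounded on the weak-star compact `W*`.
So `W*` is equicontinuous, evaluation is jointly continuous on `W* × Y`, and taking the infimum
over the compact set `F x₀` makes `w ↦ φ_{F,w}(x₀)` continuous on `W*`. Along the net,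
`φ_{F,w}(x₀)` therefore tends to `φ_{F,w₀}(x₀)` and, by lower equicontinuity, eventually stays
below `φ_{F,w}(x) + ε`. -/

theorem Equicontinuous.continuous_uncurry {ι X α : Type*} [TopologicalSpace ι]
    [TopologicalSpace X] [UniformSpace α] {F : ι → X → α} (hF : Equicontinuous F)
    (hcont : ∀ x, Continuous fun i => F i x) : Continuous ↿F := by
  rw [continuous_iff_continuousAt]
  rintro ⟨i₀, x₀⟩
  refine Uniform.tendsto_nhds_right.mpr fun U hU => ?_
  obtain ⟨V, hV, hVU⟩ := comp_mem_uniformity_sets hU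
  have hi : ∀ᶠ i in 𝓝 i₀, (F i₀ x₀, F i x₀) ∈ V :=
    Uniform.tendsto_nhds_right.mp ((hcont x₀).tendsto i₀) hV
  have hx : ∀ᶠ x in 𝓝 x₀, ∀ i, (F i x₀, F i x) ∈ V := hF x₀ V hV
  rw [nhds_prod_eq]
  refine mem_map.mpr ?_
  filter_upwards [prod_mem_prod hi hx] with ⟨i, x⟩ ⟨hi, hx⟩
  exact hVU (SetRel.prodMk_mem_comp hi (hx i))

theorem equicontinuousAt_zero_of_nonneg_of_mem_interior {ι Y : Type*} [AddCommGroup Y]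
    [Module ℝ Y] [TopologicalSpace Y] [ContinuousAdd Y] [ContinuousConstSMul ℝ Y]
    {C : Set Y} {e : Y} (he : e ∈ interior C) {M : ℝ} (f : ι → WeakDual ℝ Y)
    (hf : ∀ i, ∀ c ∈ C, 0 ≤ f i c) (hM : ∀ i, f i e ≤ M) :
    EquicontinuousAt (fun i => ⇑(f i)) 0 := by
  rw [Metric.equicontinuousAt_iff_right]
  intro ε hε
  set t := (|M| + 1) / ε
  have ht : 0 < t := by positivity
  have htε : t * ε = |M| + 1 := div_mul_cancel₀ _ hε.ne'
  have hline : ∀ s : ℝ, ∀ᶠ u in 𝓝 (0 : Y), e + s • u ∈ C := fun s => by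
    have : Tendsto (fun u : Y => e + s • u) (𝓝 0) (𝓝 e) :=
      (by fun_prop : Continuous fun u : Y => e + s • u).tendsto' 0 e (by simp)
    exact this (mem_interior_iff_mem_nhds.mp he)
  filter_upwards [hline t, hline (-t)] with u hplus hminus i
  have h₁ := hf i _ hplus
  have h₂ := hf i _ hminus
  simp only [map_add, map_smul, smul_eq_mul, neg_mul] at h₁ h₂
  have hMe := (hM i).trans (le_abs_self M)
  rw [map_zero, dist_zero_left, Real.norm_eq_abs, abs_lt]
  constructor <;> nlinarith

theorem continuousOn_scal {Y : Type*} [AddCommMonoid Y] [Module ℝ Y] [TopologicalSpace Y]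
    {W : Set (WeakDual ℝ Y)} (hW : Equicontinuous fun w : W => ⇑(w : WeakDual ℝ Y))
    {K : Set Y} (hK : IsCompact K) : ContinuousOn (fun w => scal w K) W := by
  rw [continuousOn_iff_continuous_domRestrict]
  have hjoint : Continuous ↿fun (w : W) (y : Y) => (((w : WeakDual ℝ Y) y : ℝ) : EReal) :=
    continuous_coe_real_ereal.comp <|
      hW.continuous_uncurry fun y => (WeakDual.eval_continuous y).comp continuous_subtype_val
  exact hK.continuous_sInf hjoint

theorem EReal.le_liminf_of_tendsto_of_eventually_le_add {ι : Type*} {l : Filter ι}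
    {u v : ι → EReal} {a : EReal} (hu : Tendsto u l (𝓝 a))
    (huv : ∀ ε : ℝ, 0 < ε → ∀ᶠ i in l, u i ≤ v i + ε) : a ≤ liminf v l := by
  refine EReal.ge_of_forall_gt_iff_ge.mp fun b hb => ?_
  obtain ⟨c, hbc, hca⟩ := EReal.lt_iff_exists_real_btwn.mp hb
  have hbc' : b < c := EReal.coe_lt_coe_iff.mp hbc
  refine le_liminf_of_le (by isBoundedDefault) ?_
  filter_upwards [hu.eventually (lt_mem_nhds hca), huv (c - b) (_root_.sub_pos.mpr hbc')]
    with i hcu hi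
  have := EReal.sub_le_of_le_add (hcu.le.trans hi)
  rwa [← EReal.coe_sub, sub_sub_cancel] at this

theorem stmt_18_general {X Y : Type*} [AddCommGroup X] [Module ℝ X] [TopologicalSpace X]
    [IsTopologicalAddGroup X]
    [AddCommGroup Y] [Module ℝ Y] [TopologicalSpace Y]
    [IsTopologicalAddGroup Y] [ContinuousSMul ℝ Y]
    (C : Set Y)
    (hint : (interior C).Nonempty)
    (Wstar : Set (WeakDual ℝ Y)) (hWcpt : IsCompact Wstar)
    (hWsub : ∀ w ∈ Wstar, ∀ c ∈ C, 0 ≤ w c)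
    (F : X → Set Y) (x₀ : X) (hcpt : IsCompact (F x₀))
    (hequi : ∀ ε : ℝ, 0 < ε → ∃ V ∈ nhds (0 : X), ∀ x : X, x - x₀ ∈ V →
      ∀ w ∈ Wstar, scal w (F x₀) ≤ scal w (F x) + ((ε : ℝ) : EReal))
    {ι : Type*} (l : Filter ι)
    (xs : ι → X) (w : ι → WeakDual ℝ Y) (w₀ : WeakDual ℝ Y)
    (hxs : Filter.Tendsto xs l (nhds x₀))
    (hw : ∀ i, w i ∈ Wstar) (hw₀ : w₀ ∈ Wstar) (hconvw : Filter.Tendsto w l (nhds w₀)) :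
    scal w₀ (F x₀) ≤ Filter.liminf (fun i => scal (w i) (F (xs i))) l := by
  obtain ⟨e, he⟩ := hint
  obtain ⟨M, hM⟩ := hWcpt.bddAbove_image (WeakDual.eval_continuous e).continuousOn
  have hWequi : Equicontinuous fun v : Wstar => ⇑(v : WeakDual ℝ Y) :=
    equicontinuous_of_equicontinuousAt_zero (fun v : Wstar => (v : WeakDual ℝ Y)) <|
      equicontinuousAt_zero_of_nonneg_of_mem_interior he _ (fun v => hWsub v v.2)
        fun v => hM ⟨v, v.2, rfl⟩
  have hlim : Tendsto (fun i => scal (w i) (F x₀)) l (𝓝 (scal w₀ (F x₀))) :=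
    (continuousOn_scal hWequi hcpt w₀ hw₀).tendsto.comp
      (tendsto_nhdsWithin_iff.mpr ⟨hconvw, .of_forall hw⟩)
  refine EReal.le_liminf_of_tendsto_of_eventually_le_add hlim fun ε hε => ?_
  obtain ⟨V, hV, hVε⟩ := hequi ε hε
  have hxs' : Tendsto (fun i => xs i - x₀) l (𝓝 0) := by simpa using hxs.sub_const x₀
  filter_upwards [hxs' hV] with i hi
  exact hVε _ hi _ (hw i)

theorem stmt_18 {X Y : Type*} [AddCommGroup X] [Module ℝ X] [TopologicalSpace X]
    [IsTopologicalAddGroup X]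
    [AddCommGroup Y] [Module ℝ Y] [TopologicalSpace Y]
    [IsTopologicalAddGroup Y] [ContinuousSMul ℝ Y] [LocallyConvexSpace ℝ Y] [T2Space Y]
    (C : Set Y) (hclosed : IsClosed C) (hconv : Convex ℝ C)
    (hcone : ∀ c ∈ C, ∀ r : ℝ, 0 ≤ r → r • c ∈ C)
    (hint : (interior C).Nonempty) (hCne : C ≠ Set.univ)
    (Wstar : Set (WeakDual ℝ Y)) (hWcpt : IsCompact Wstar)
    (hWsub : ∀ w ∈ Wstar, ∀ c ∈ C, 0 ≤ w c) (hW0 : (0 : WeakDual ℝ Y) ∉ Wstar)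
    (hWbase : ∀ w : WeakDual ℝ Y, (∀ c ∈ C, 0 ≤ w c) → w ≠ 0 →
      ∃ t : ℝ, 0 < t ∧ ∃ w' ∈ Wstar, w = t • w')
    (F : X → Set Y) (x₀ : X) (hx₀ : (F x₀).Nonempty) (hcpt : IsCompact (F x₀))
    (hequi : ∀ ε : ℝ, 0 < ε → ∃ V ∈ nhds (0 : X), ∀ x : X, x - x₀ ∈ V →
      ∀ w ∈ Wstar, scal w (F x₀) ≤ scal w (F x) + ((ε : ℝ) : EReal))
    {ι : Type*} (l : Filter ι) [l.NeBot]
    (xs : ι → X) (w : ι → WeakDual ℝ Y) (w₀ : WeakDual ℝ Y)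
    (hxs : Filter.Tendsto xs l (nhds x₀))
    (hw : ∀ i, w i ∈ Wstar) (hw₀ : w₀ ∈ Wstar) (hconvw : Filter.Tendsto w l (nhds w₀)) :
    scal w₀ (F x₀) ≤ Filter.liminf (fun i => scal (w i) (F (xs i))) l :=
  stmt_18_general C hint Wstar hWcpt hWsub F x₀ hcpt hequi l xs w w₀ hxs hw hw₀ hconvw
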